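/- The quintic ODE 9(y'')^2 y^(5) - 45 y'' y''' y'''' + 40(y''')^3 = 0 is satisfied by any smooth function y(x) with y''(x) > 0 such that ((y'')^{-2/3})''' = 0; conversely, on an interval where y'' > 0, a smooth solution of the quintic ODE satisfies ((y'')^{-2/3})''' = 0. -/

import Mathlib

open Set

/-- iterated `derivWithin` chain -/
noncomputable def stmt15W (s : Set ℝ) (y : ℝ → ℝ) : ℕ → ℝ → ℝ
  | 0 => y
  | n + 1 => derivWithin (stmt15W s y n) s

lemma stmt15W_succ' (s : Set ℝ) (y : ℝ → ℝ) (n : ℕ) :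
    stmt15W s y (n + 1) = stmt15W s (derivWithin y s) n := by
  induction n with
  | zero => rfl
  | succ n ih =>
      show derivWithin (stmt15W s y (n + 1)) s = _
      rw [ih]; rfl

lemma stmt15W_eq {s : Set ℝ} (hsu : UniqueDiffOn ℝ s) {x : ℝ} (hx : x ∈ s)
    (n : ℕ) (y : ℝ → ℝ) : iteratedDerivWithin n y s x = stmt15W s y n x := by
  induction n generalizing y with
  | zero => simp [stmt15W]
  | succ n ih =>
      rw [iteratedDerivWithin_succ', ih, stmt15W_succ']

lemma stmt15W_contDiffOn {s : Set ℝ} (hsu : UniqueDiffOn ℝ s) {y : ℝ → ℝ}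
    (hy : ContDiffOn ℝ (⊤ : ℕ∞) y s) (n : ℕ) : ContDiffOn ℝ (⊤ : ℕ∞) (stmt15W s y n) s := by
  induction n with
  | zero => exact hy
  | succ n ih => exact ih.derivWithin hsu (by simp)

lemma stmt15W_hasDeriv {s : Set ℝ} (hsu : UniqueDiffOn ℝ s) {y : ℝ → ℝ}
    (hy : ContDiffOn ℝ (⊤ : ℕ∞) y s) (n : ℕ) {x : ℝ} (hx : x ∈ s) :
    HasDerivWithinAt (stmt15W s y n) (stmt15W s y (n + 1) x) s x :=
  (((stmt15W_contDiffOn hsu hy n).differentiableOn (by simp)) x hx).hasDerivWithinAt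

lemma stmt15_key {s : Set ℝ} (hso : IsOpen s) {y : ℝ → ℝ}
    (hy : ContDiffOn ℝ (⊤ : ℕ∞) y s) (hpos : ∀ x ∈ s, 0 < stmt15W s y 2 x)
    {x : ℝ} (hx : x ∈ s) :
    iteratedDerivWithin 3 (fun t => (stmt15W s y 2 t) ^ (-(2 : ℝ) / 3)) s x
      = -(2 / 27) * (stmt15W s y 2 x) ^ ((-11 : ℝ) / 3) *
        (9 * (stmt15W s y 2 x) ^ 2 * stmt15W s y 5 x
          - 45 * stmt15W s y 2 x * stmt15W s y 3 x * stmt15W s y 4 x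
          + 40 * (stmt15W s y 3 x) ^ 3) := by
  have hsu : UniqueDiffOn ℝ s := hso.uniqueDiffOn
  set w2 := stmt15W s y 2 with hw2
  set w3 := stmt15W s y 3 with hw3
  set w4 := stmt15W s y 4 with hw4
  set w5 := stmt15W s y 5 with hw5
  have hd2 : ∀ t ∈ s, HasDerivWithinAt w2 (w3 t) s t := fun t ht => stmt15W_hasDeriv hsu hy 2 ht
  have hd3 : ∀ t ∈ s, HasDerivWithinAt w3 (w4 t) s t := fun t ht => stmt15W_hasDeriv hsu hy 3 ht
  have hd4 : ∀ t ∈ s, HasDerivWithinAt w4 (w5 t) s t := fun t ht => stmt15W_hasDeriv hsu hy 4 ht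
  -- rpow composition
  have hrpow : ∀ (p : ℝ) (t : ℝ), t ∈ s →
      HasDerivWithinAt (fun u => w2 u ^ p) (p * w2 t ^ (p - 1) * w3 t) s t := by
    intro p t ht
    have h := (Real.hasDerivAt_rpow_const (p := p) (Or.inl (hpos t ht).ne')).comp_hasDerivWithinAt
      t (hd2 t ht)
    exact h
  set G0 : ℝ → ℝ := fun t => w2 t ^ (-(2 : ℝ) / 3) with hG0
  set G1 : ℝ → ℝ := fun t => -(2 : ℝ) / 3 * (w2 t ^ ((-5 : ℝ) / 3) * w3 t) with hG1
  set G2 : ℝ → ℝ := fun t =>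
      -(2 : ℝ) / 3 * ((-5 : ℝ) / 3 * w2 t ^ ((-8 : ℝ) / 3) * w3 t * w3 t
        + w2 t ^ ((-5 : ℝ) / 3) * w4 t) with hG2
  have hDG0 : ∀ t ∈ s, HasDerivWithinAt G0 (G1 t) s t := by
    intro t ht
    refine (hrpow (-(2 : ℝ) / 3) t ht).congr_deriv ?_
    rw [show (-(2 : ℝ) / 3 - 1) = (-5 : ℝ) / 3 by norm_num]
    try ring
  have hDG1 : ∀ t ∈ s, HasDerivWithinAt G1 (G2 t) s t := by
    intro t ht
    have ha : HasDerivWithinAt (fun u => w2 u ^ ((-5 : ℝ) / 3))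
        ((-5 : ℝ) / 3 * w2 t ^ ((-8 : ℝ) / 3) * w3 t) s t := by
      have := hrpow ((-5 : ℝ) / 3) t ht
      rwa [show ((-5 : ℝ) / 3 - 1) = (-8 : ℝ) / 3 by norm_num] at this
    exact (ha.mul (hd3 t ht)).const_mul _
  have hDG2 : ∀ t ∈ s, HasDerivWithinAt G2
      (-(2 : ℝ) / 3 *
        ((((-5 : ℝ) / 3 * ((-8 : ℝ) / 3 * w2 t ^ ((-11 : ℝ) / 3) * w3 t)) * w3 t
            + (-5 : ℝ) / 3 * w2 t ^ ((-8 : ℝ) / 3) * w4 t) * w3 t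
          + ((-5 : ℝ) / 3 * w2 t ^ ((-8 : ℝ) / 3) * w3 t) * w4 t
          + (((-5 : ℝ) / 3 * w2 t ^ ((-8 : ℝ) / 3) * w3 t) * w4 t
            + w2 t ^ ((-5 : ℝ) / 3) * w5 t))) s t := by
    intro t ht
    have hb : HasDerivWithinAt (fun u => w2 u ^ ((-8 : ℝ) / 3))
        ((-8 : ℝ) / 3 * w2 t ^ ((-11 : ℝ) / 3) * w3 t) s t := by
      have := hrpow ((-8 : ℝ) / 3) t ht
      rwa [show ((-8 : ℝ) / 3 - 1) = (-11 : ℝ) / 3 by norm_num] at this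
    have hc : HasDerivWithinAt (fun u => w2 u ^ ((-5 : ℝ) / 3))
        ((-5 : ℝ) / 3 * w2 t ^ ((-8 : ℝ) / 3) * w3 t) s t := by
      have := hrpow ((-5 : ℝ) / 3) t ht
      rwa [show ((-5 : ℝ) / 3 - 1) = (-8 : ℝ) / 3 by norm_num] at this
    have hA := ((hb.const_mul ((-5 : ℝ) / 3)).mul (hd3 t ht)).mul (hd3 t ht)
    have hB := hc.mul (hd4 t ht)
    have := (hA.add hB).const_mul (-(2 : ℝ) / 3)
    refine this.congr_deriv ?_
    simp only [Pi.mul_apply]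
    try ring
  -- turn HasDerivWithinAt into derivWithin equalities
  have e1 : ∀ t ∈ s, iteratedDerivWithin 1 G0 s t = G1 t := by
    intro t ht
    rw [iteratedDerivWithin_one]
    exact (hDG0 t ht).derivWithin (hsu t ht)
  have e2 : ∀ t ∈ s, iteratedDerivWithin 2 G0 s t = G2 t := by
    intro t ht
    rw [iteratedDerivWithin_succ,
      derivWithin_congr (fun u hu => e1 u hu) (e1 t ht)]
    exact (hDG1 t ht).derivWithin (hsu t ht)
  rw [iteratedDerivWithin_succ,
    derivWithin_congr (fun u hu => e2 u hu) (e2 x hx),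
    (hDG2 x hx).derivWithin (hsu x hx)]
  -- now an algebraic identity in rpow values
  have hp := hpos x hx
  have r1 : w2 x ^ ((-8 : ℝ) / 3) = w2 x ^ ((-11 : ℝ) / 3) * w2 x := by
    rw [show ((-8 : ℝ) / 3) = (-11 : ℝ) / 3 + 1 by norm_num, Real.rpow_add hp, Real.rpow_one]
  have r2 : w2 x ^ ((-5 : ℝ) / 3) = w2 x ^ ((-11 : ℝ) / 3) * w2 x ^ 2 := by
    rw [show ((-5 : ℝ) / 3) = (-11 : ℝ) / 3 + 2 by norm_num, Real.rpow_add hp, Real.rpow_two]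
  rw [r1, r2]
  ring

theorem stmt15 (a b : ℝ) (hab : a < b) (y : ℝ → ℝ)
    (hy : ContDiffOn ℝ (⊤ : ℕ∞) y (Set.Ioo a b))
    (hpos : ∀ x ∈ Set.Ioo a b, 0 < iteratedDerivWithin 2 y (Set.Ioo a b) x) :
    (∀ x ∈ Set.Ioo a b,
        9 * (iteratedDerivWithin 2 y (Set.Ioo a b) x) ^ 2 *
            iteratedDerivWithin 5 y (Set.Ioo a b) x
          - 45 * iteratedDerivWithin 2 y (Set.Ioo a b) x *
              iteratedDerivWithin 3 y (Set.Ioo a b) x *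
              iteratedDerivWithin 4 y (Set.Ioo a b) x
          + 40 * (iteratedDerivWithin 3 y (Set.Ioo a b) x) ^ 3 = 0) ↔
    (∀ x ∈ Set.Ioo a b,
        iteratedDerivWithin 3
          (fun t => (iteratedDerivWithin 2 y (Set.Ioo a b) t) ^ (-(2 : ℝ) / 3))
          (Set.Ioo a b) x = 0) := by
  set s := Set.Ioo a b with hs_def
  have hso : IsOpen s := isOpen_Ioo
  have hsu : UniqueDiffOn ℝ s := hso.uniqueDiffOn
  have hW : ∀ (n : ℕ) (x : ℝ), x ∈ s → iteratedDerivWithin n y s x = stmt15W s y n x :=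
    fun n x hx => stmt15W_eq hsu hx n y
  have hpos' : ∀ x ∈ s, 0 < stmt15W s y 2 x := fun x hx => by
    rw [← hW 2 x hx]; exact hpos x hx
  have hfun : ∀ x ∈ s,
      iteratedDerivWithin 3 (fun t => (iteratedDerivWithin 2 y s t) ^ (-(2 : ℝ) / 3)) s x
        = iteratedDerivWithin 3 (fun t => (stmt15W s y 2 t) ^ (-(2 : ℝ) / 3)) s x := by
    intro x hx
    exact iteratedDerivWithin_congr (fun t ht => by simp only [hW 2 t ht]) hx
  have hfac : ∀ x ∈ s, (0 : ℝ) < -(2 / 27) * (stmt15W s y 2 x) ^ ((-11 : ℝ) / 3) * (-1) := by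
    intro x hx
    have := Real.rpow_pos_of_pos (hpos' x hx) ((-11 : ℝ) / 3)
    nlinarith
  constructor
  · intro h x hx
    rw [hfun x hx, stmt15_key hso hy hpos' hx]
    have h0 := h x hx
    rw [hW 2 x hx, hW 3 x hx, hW 4 x hx, hW 5 x hx] at h0
    rw [h0]; ring
  · intro h x hx
    have h0 := h x hx
    rw [hfun x hx, stmt15_key hso hy hpos' hx] at h0
    rw [hW 2 x hx, hW 3 x hx, hW 4 x hx, hW 5 x hx]
    have hne : -(2 / 27) * (stmt15W s y 2 x) ^ ((-11 : ℝ) / 3) ≠ 0 := by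
      have := Real.rpow_pos_of_pos (hpos' x hx) ((-11 : ℝ) / 3)
      nlinarith
    exact (mul_eq_zero.mp h0).resolve_left hne
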